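/- Fix coordinates u₁,…,u_n on 𝓛* (n = dim 𝓛). Let Ψ be the maximum likelihood estimator of a projective variety X ⊆ ℙ(𝓛) with MLD_F(X) = 1, and write each coordinate ψᵢ of Ψ as a product ψᵢ = cᵢ·∏_{f∈𝓕} f^{α_{i,f}}, where cᵢ ∈ ℂ, 𝓕 is the set of all prime (irreducible) polynomial factors appearing in some coordinate, and α_{i,f} ∈ ℤ. Then: (a) α_{i,f} ≥ −1 for all f ∈ 𝓕 and all i ∈ {1,…,n}, i.e. every factor appears in a denominator with exponent at most one; and (b) if f appears in some denominator, then ∂f/∂u_j ≠ 0 if and only if α_{j,f} = −1, i.e. f depends only on those variables u_j for which f divides the denominator of ψ_j. -/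

import Mathlib

open MvPolynomial

noncomputable section

/-- Points of the affine space `ℂ^ι`. -/
abbrev Pt (ι : Type) := ι → ℂ

variable {ι κ : Type} [Fintype ι] [DecidableEq ι] [Fintype κ] [DecidableEq κ]

/-- The standard bilinear pairing identifying `ℂ^ι` with its dual. -/
def dotP (u v : Pt ι) : ℂ := ∑ i, u i * v i

/-- The gradient of a polynomial at a point. -/
def gradP (F : MvPolynomial ι ℂ) (p : Pt ι) : Pt ι := fun i => eval p (pderiv i F)

/-- The linear functional `v ↦ dotP u v`. -/
def dotL (u : Pt ι) : (Pt ι) →ₗ[ℂ] ℂ :=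
  ∑ i, u i • (LinearMap.proj i : (ι → ℂ) →ₗ[ℂ] ℂ)

/-- The vanishing ideal of a subset of `ℂ^ι`. -/
def vanIdeal (X : Set (Pt ι)) : Set (MvPolynomial ι ℂ) :=
  {f | ∀ x ∈ X, eval x f = 0}

/-- The common zero locus of a set of polynomials. -/
def zeroSet (I : Set (MvPolynomial ι ℂ)) : Set (Pt ι) := {x | ∀ f ∈ I, eval x f = 0}

/-- The Zariski closure of a subset of `ℂ^ι`. -/
def zarClosure (X : Set (Pt ι)) : Set (Pt ι) := zeroSet (vanIdeal X)

/-- An (embedded) affine variety: a Zariski closed subset of `ℂ^ι`. -/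
def IsAffineVariety (X : Set (Pt ι)) : Prop := X = zarClosure X

/-- The Zariski tangent space of `X` at `p`. -/
def tangentSpace (X : Set (Pt ι)) (p : Pt ι) : Submodule ℂ (Pt ι) :=
  ⨅ f ∈ vanIdeal X, LinearMap.ker (dotL (gradP f p))

/-- The smooth locus of an (irreducible) variety: the points where the Zariski
tangent space has minimal dimension. -/
def smoothLocus (X : Set (Pt ι)) : Set (Pt ι) :=
  {p | p ∈ X ∧ ∀ q ∈ X, Module.finrank ℂ (tangentSpace X p) ≤ Module.finrank ℂ (tangentSpace X q)}

/-- `p` is a critical point of the Gaussian log-likelihood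
`ℓ_{F,u} = log F - u` along `X`: it lies in the smooth locus, off `V(F)`, and the
differential of `ℓ_{F,u}` annihilates the tangent space of `X` at `p`. -/
def IsCriticalPoint (X : Set (Pt ι)) (F : MvPolynomial ι ℂ) (u : Pt ι) (p : Pt ι) : Prop :=
  p ∈ smoothLocus X ∧ eval p F ≠ 0 ∧
    ∀ v ∈ tangentSpace X p, dotP (gradP F p) v = eval p F * dotP u v

/-- A property holds generically (for general `u`) if it holds on the complement
of some hypersurface. -/
def Generically (P : Pt ι → Prop) : Prop :=
  ∃ h : MvPolynomial ι ℂ, h ≠ 0 ∧ ∀ u : Pt ι, eval u h ≠ 0 → P u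

/-- The (Gaussian) maximum likelihood degree of `X` with respect to `F` is `d`:
for general `u` the log-likelihood `ℓ_{F,u}` has exactly `d` critical points
on `X^sm ∖ V(F)`. -/
def MLDegreeIs (X : Set (Pt ι)) (F : MvPolynomial ι ℂ) (d : ℕ) : Prop :=
  Generically (fun u : Pt ι => {p | IsCriticalPoint X F u p}.ncard = d)

/-- A cone in `ℂ^ι` (the affine cone of a projective variety is such). -/
def IsCone (X : Set (Pt ι)) : Prop := ∀ t : ℂ, ∀ x ∈ X, t • x ∈ X

/-- An irreducible affine variety: nonempty, closed, with prime vanishing ideal. -/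
def IsIrreducibleVariety (X : Set (Pt ι)) : Prop :=
  IsAffineVariety X ∧ X.Nonempty ∧
    ∀ f g : MvPolynomial ι ℂ, (∀ x ∈ X, eval x f * eval x g = 0) →
      (∀ x ∈ X, eval x f = 0) ∨ ∀ x ∈ X, eval x g = 0

/-- A rational map `ℂ^ι ⇢ ℂ^κ`, given by numerator polynomials over a common
nonzero denominator. -/
structure RatMap (ι κ : Type) [Fintype ι] where
  num : κ → MvPolynomial ι ℂ
  den : MvPolynomial ι ℂ
  den_ne : den ≠ 0

/-- The locus where the rational map is defined. -/
def RatMap.isDefinedAt (Ψ : RatMap ι κ) (u : Pt ι) : Prop := eval u Ψ.den ≠ 0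

/-- Evaluation of a rational map. -/
def RatMap.eval (Ψ : RatMap ι κ) (u : Pt ι) : Pt κ :=
  fun i => MvPolynomial.eval u (Ψ.num i) / MvPolynomial.eval u Ψ.den

/-- The rational map `Ψ` maps into `C` with Zariski-dense image; i.e. it is a
dominant rational map onto `C`. -/
def RatMap.DominatesOnto (Ψ : RatMap ι κ) (C : Set (Pt κ)) : Prop :=
  (∀ u, Ψ.isDefinedAt u → Ψ.eval u ∈ C) ∧
    ∀ g : MvPolynomial κ ℂ, (∀ u, Ψ.isDefinedAt u → MvPolynomial.eval (Ψ.eval u) g = 0) →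
      ∀ x ∈ C, MvPolynomial.eval x g = 0

/-- `Ψ` is (a rational representation of) the maximum likelihood estimator of `X`
with respect to `F`: for general `u` its value is the unique critical point of the
log-likelihood `ℓ_{F,u}` along `X`. -/
def IsMLEof (X : Set (Pt ι)) (F : MvPolynomial ι ℂ) (Ψ : RatMap ι ι) : Prop :=
  Generically (fun u : Pt ι => Ψ.isDefinedAt u ∧ {p | IsCriticalPoint X F u p} = {Ψ.eval u})

end

/-!
Write `Ψ = a / b` with polynomial numerators `aₖ` and common denominator `b`, and put
`P = F(a)`. At a general `u` the point `Ψ(u)` is critical, so `⟨∇F(Ψ u), v⟩ = F(Ψ u) ⟨u, v⟩`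
for every tangent vector `v` of the cone at `Ψ(u)`. Taking `v = Ψ(u)` and using Euler's identity
gives `⟨u, a⟩ = deg F · b`; taking `v = b² ∂ⱼΨ`, which is tangent because `Ψ` lands in the cone,
the chain rule and Euler's identity turn the critical equation into the polynomial identity
`aⱼ P = deg F · P ∂ⱼb - b ∂ⱼP`.

Fix a prime factor `f` and write `b = fʳ b'`, `aⱼ = f^sⱼ aⱼ'`, `P = fᵐ P'` with `f` dividing none
of `b', aⱼ', P'`; then `α_{j,f} = sⱼ - r`, and the identity becomes
`f^(sⱼ+1) aⱼ' P' = fʳ ((deg F · r - m) ∂ⱼf · b' P' + f · (…))`. Comparing powers of `f` gives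
`r ≤ sⱼ + 1`, which is (a). If `r = sᵢ + 1` for some `i`, then `f` does not divide the constant
`deg F · r - m`; as `f ∤ ∂ⱼf` unless `∂ⱼf = 0` (it has smaller degree), `r = sⱼ + 1` holds exactly
when `∂ⱼf ≠ 0`, which is (b).
-/

open Finset

namespace Generically

variable {ι : Type} {P Q : Pt ι → Prop}

theorem mono (hP : Generically P) (hPQ : ∀ u, P u → Q u) : Generically Q :=
  let ⟨h, hh, hP⟩ := hP
  ⟨h, hh, fun u hu => hPQ u (hP u hu)⟩

theorem exists_point (hP : Generically P) : ∃ u, P u := by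
  obtain ⟨h, hh, hP⟩ := hP
  by_contra! hnone
  exact hh (MvPolynomial.funext fun u => by_contra fun hu => hnone u (hP u (by simpa using hu)))

theorem eq_of_eval_eq {p q : MvPolynomial ι ℂ} (h : Generically fun u => eval u p = eval u q) :
    p = q := by
  obtain ⟨h, hh, hpq⟩ := h
  have : h * (p - q) = 0 := MvPolynomial.funext fun u => by
    by_cases hu : eval u h = 0 <;> simp [hu, hpq u]
  exact sub_eq_zero.mp ((mul_eq_zero.mp this).resolve_left hh)

end Generically

namespace MvPolynomial

variable {σ τ R : Type*}

theorem IsHomogeneous.eval_smul [CommSemiring R] {φ : MvPolynomial σ R} {n : ℕ}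
    (hφ : φ.IsHomogeneous n) (t : R) (x : σ → R) : eval (t • x) φ = t ^ n * eval x φ := by
  conv_lhs => rw [φ.as_sum]
  conv_rhs => rw [φ.as_sum]
  simp only [map_sum, Finset.mul_sum, eval_monomial]
  refine Finset.sum_congr rfl fun d hd => ?_
  simp only [Finsupp.prod, Pi.smul_apply, smul_eq_mul, mul_pow, Finset.prod_mul_distrib,
    Finset.prod_pow_eq_pow_sum, ← hφ.degree_eq_sum_deg_support hd]
  ring

theorem eval_homogeneousComponent_eq_zero [CommRing R] [IsDomain R] [Infinite R]
    {f : MvPolynomial σ R} {p : σ → R} (H : ∀ t : R, eval (t • p) f = 0) (d : ℕ) :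
    eval p (homogeneousComponent d f) = 0 := by
  set q : Polynomial R := ∑ e ∈ range (f.totalDegree + 1),
    Polynomial.monomial e (eval p (homogeneousComponent e f))
  have hq : q = 0 := Polynomial.funext fun t => by
    have hft := H t
    rw [← sum_homogeneousComponent f, map_sum] at hft
    simp only [q, Polynomial.eval_finsetSum, Polynomial.eval_monomial, Polynomial.eval_zero,
      ← hft, (homogeneousComponent_isHomogeneous _ f).eval_smul, mul_comm]
  have hcoeff := congrArg (Polynomial.coeff · d) hq
  simp only [q, Polynomial.finsetSum_coeff, Polynomial.coeff_monomial, Polynomial.coeff_zero,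
    Finset.sum_ite_eq', mem_range] at hcoeff
  split_ifs at hcoeff with hd
  · exact hcoeff
  · rw [homogeneousComponent_eq_zero _ _ (by omega), map_zero]

theorem pderiv_aeval [CommSemiring R] [Fintype σ] (a : σ → MvPolynomial τ R) (j : τ)
    (f : MvPolynomial σ R) :
    pderiv j (aeval a f) = ∑ k, aeval a (pderiv k f) * pderiv j (a k) := by
  classical
  induction f using MvPolynomial.induction_on with
  | C r => simp
  | add p q hp hq => simp only [map_add, hp, hq, add_mul, Finset.sum_add_distrib]
  | mul_X p i hp =>
    simp only [map_mul, map_add, aeval_X, pderiv_mul, hp, pderiv_X, Pi.single_apply, mul_ite,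
      mul_one, mul_zero, apply_ite (aeval a), map_zero, add_mul, ite_mul, zero_mul,
      Finset.sum_add_distrib, Finset.sum_mul, Finset.sum_ite_eq, Finset.mem_univ, if_true]
    exact congrArg (· + _) (Finset.sum_congr rfl fun _ _ => mul_right_comm _ _ _)

theorem IsHomogeneous.sum_aeval_pderiv_mul [CommRing R] [Fintype σ] {g : MvPolynomial σ R}
    {d : ℕ} (hg : g.IsHomogeneous d) (a : σ → MvPolynomial τ R) (b : MvPolynomial τ R) (j : τ) :
    ∑ k, MvPolynomial.aeval a (pderiv k g) * (pderiv j (a k) * b - a k * pderiv j b)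
      = b * pderiv j (MvPolynomial.aeval a g)
        - (d : MvPolynomial τ R) * pderiv j b * MvPolynomial.aeval a g := by
  have euler : ∑ k, a k * MvPolynomial.aeval a (pderiv k g) = d * MvPolynomial.aeval a g := by
    simpa [nsmul_eq_mul] using congrArg (MvPolynomial.aeval a) hg.sum_X_mul_pderiv
  rw [pderiv_aeval, mul_right_comm, mul_comm _ (pderiv j b), ← euler]
  simp only [Finset.mul_sum, ← Finset.sum_sub_distrib]
  exact Finset.sum_congr rfl fun k _ => by ring

theorem totalDegree_le_of_dvd [CommSemiring R] [NoZeroDivisors R] {p q : MvPolynomial σ R}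
    (hq : q ≠ 0) (h : p ∣ q) : p.totalDegree ≤ q.totalDegree := by
  obtain ⟨r, rfl⟩ := h
  rw [totalDegree_mul_of_isDomain (left_ne_zero_of_mul hq) (right_ne_zero_of_mul hq)]
  exact Nat.le_add_right _ _

theorem totalDegree_pderiv_lt [CommSemiring R] {f : MvPolynomial σ R} {j : σ}
    (h : pderiv j f ≠ 0) : (pderiv j f).totalDegree < f.totalDegree := by
  classical
  have key : ∀ m ∈ (pderiv j f).support, (m.sum fun _ e => e) + 1 ≤ f.totalDegree := by
    intro m hm
    rw [mem_support_iff, coeff_pderiv] at hm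
    have := le_totalDegree (mem_support_iff.mpr (left_ne_zero_of_mul hm))
    rwa [Finsupp.sum_add_index' (fun _ => rfl) (fun _ _ _ => rfl), Finsupp.sum_single_index rfl]
      at this
  obtain ⟨m, hm⟩ := support_nonempty.mpr h
  have hle : (pderiv j f).totalDegree ≤ f.totalDegree - 1 :=
    Finset.sup_le fun m hm => Nat.le_sub_one_of_lt (key m hm)
  have := key m hm
  omega

theorem not_dvd_pderiv [CommSemiring R] [NoZeroDivisors R] {f : MvPolynomial σ R} {j : σ}
    (h : pderiv j f ≠ 0) : ¬ f ∣ pderiv j f :=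
  fun hdvd => (totalDegree_le_of_dvd h hdvd).not_gt (totalDegree_pderiv_lt h)

theorem mul_pderiv_pow_mul [CommSemiring R] (f g : MvPolynomial σ R) (r : ℕ) (j : σ) :
    f * pderiv j (f ^ r * g) = f ^ r * (r * pderiv j f * g + f * pderiv j g) := by
  rcases r with _ | r
  · simp
  · simp only [pderiv_mul, pderiv_pow, Nat.add_sub_cancel, Nat.cast_add, Nat.cast_one]
    ring

end MvPolynomial

section PrimePower

variable {M : Type*} [CommMonoidWithZero M] [IsCancelMulZero M] {p x y : M} {n r : ℕ}

theorem Prime.le_of_pow_mul_eq_pow_mul (hp : Prime p) (hx : ¬ p ∣ x)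
    (h : p ^ n * x = p ^ r * y) : r ≤ n :=
  (pow_dvd_pow_iff hp.ne_zero hp.not_isUnit).mp (hp.pow_dvd_of_dvd_mul_right r hx ⟨y, h⟩)

theorem Prime.eq_iff_not_dvd_of_pow_mul_eq_pow_mul (hp : Prime p) (hx : ¬ p ∣ x)
    (h : p ^ n * x = p ^ r * y) : n = r ↔ ¬ p ∣ y := by
  obtain ⟨k, rfl⟩ := Nat.exists_eq_add_of_le (hp.le_of_pow_mul_eq_pow_mul hx h)
  rw [pow_add, mul_assoc] at h
  obtain rfl := mul_left_cancel₀ (pow_ne_zero r hp.ne_zero) h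
  rcases k with _ | k
  · simpa using hx
  · simpa using dvd_mul_of_dvd_left (dvd_pow_self p k.succ_ne_zero) x

theorem Prime.not_dvd_prod_pow {𝓕 : Finset M} (hp : Prime p) (hirr : ∀ f ∈ 𝓕, Irreducible f)
    (hne : ∀ f ∈ 𝓕, ¬ Associated f p) (e : M → ℕ) : ¬ p ∣ ∏ f ∈ 𝓕, f ^ e f := by
  intro hdvd
  obtain ⟨f, hf, hpf⟩ := hp.exists_mem_finset_dvd hdvd
  exact hne f hf (hp.irreducible.associated_of_dvd (hirr f hf) (hp.dvd_of_dvd_pow hpf)).symm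

theorem Prime.exists_eq_pow_mul_of_mul_prod_eq [WfDvdMonoid M] {𝓕 : Finset M}
    (hprime : ∀ f ∈ 𝓕, Prime f) (hnonassoc : ∀ f ∈ 𝓕, ∀ g ∈ 𝓕, f ≠ g → ¬ Associated f g)
    (hp : p ∈ 𝓕) {a b' c : M} (hc : IsUnit c) (hb' : ¬ p ∣ b') {α : M → ℤ}
    (h : a * ∏ f ∈ 𝓕, f ^ (-α f).toNat = c * (p ^ r * b') * ∏ f ∈ 𝓕, f ^ (α f).toNat) :
    ∃ (s : ℕ) (a' : M), ¬ p ∣ a' ∧ a = p ^ s * a' ∧ α p = (s : ℤ) - r := by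
  classical
  have hpp := hprime p hp
  have hndvd := hpp.not_dvd_prod_pow (𝓕 := 𝓕.erase p)
    (fun f hf => (hprime f (mem_of_mem_erase hf)).irreducible)
    (fun f hf => hnonassoc f (mem_of_mem_erase hf) p hp (ne_of_mem_erase hf))
  set A := ∏ f ∈ 𝓕.erase p, f ^ (-α f).toNat
  set B := ∏ f ∈ 𝓕.erase p, f ^ (α f).toNat
  have hB : ¬ p ∣ c * b' * B := fun hd => (hpp.dvd_mul.mp hd).elim
    (fun hd => (hpp.dvd_mul.mp hd).elim (fun hc' => hpp.not_isUnit (isUnit_of_dvd_unit hc' hc)) hb')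
    (hndvd _)
  rw [← mul_prod_erase _ _ hp, ← mul_prod_erase _ _ hp] at h
  have h' : p ^ (-α p).toNat * (a * A) = p ^ (r + (α p).toNat) * (c * b' * B) := by
    rw [pow_add]
    calc _ = a * (p ^ (-α p).toNat * A) := by ac_rfl
      _ = _ := h
      _ = _ := by ac_rfl
  have ha : a ≠ 0 := by
    rintro rfl
    rw [zero_mul, mul_zero, eq_comm, mul_eq_zero] at h'
    exact h'.elim (pow_ne_zero _ hpp.ne_zero) fun h0 => hB (h0 ▸ dvd_zero p)
  obtain ⟨s, a', ha', rfl⟩ := WfDvdMonoid.max_power_factor ha hpp.irreducible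
  refine ⟨s, a', ha', rfl, ?_⟩
  have hA : ¬ p ∣ a' * A := fun hd => (hpp.dvd_mul.mp hd).elim ha' (hndvd _)
  have hexp := (hpp.eq_iff_not_dvd_of_pow_mul_eq_pow_mul (n := s + (-α p).toNat) hA
    (by rw [← h', pow_add]; ac_rfl)).mpr hB
  omega

end PrimePower

namespace MvPolynomial

variable {σ R : Type*} [CommRing R] [IsDomain R]

theorem pow_succ_mul_eq_pow_mul_of_mul_eq {f a b P a' b' P' δ : MvPolynomial σ R} {s r m : ℕ}
    {j : σ} (hf : f ≠ 0) (h : a * P = δ * P * pderiv j b - b * pderiv j P)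
    (ha : a = f ^ s * a') (hb : b = f ^ r * b') (hP : P = f ^ m * P') :
    f ^ (s + 1) * (a' * P') = f ^ r * ((δ * r - m) * pderiv j f * (b' * P')
      + f * (δ * P' * pderiv j b' - b' * pderiv j P')) := by
  subst ha hb hP
  apply mul_left_cancel₀ (pow_ne_zero m hf)
  linear_combination f * h + (δ * f ^ m * P') * mul_pderiv_pow_mul f b' r j
    - (f ^ r * b') * mul_pderiv_pow_mul f P' m j

theorem pderiv_ne_zero_iff_of_pow_mul_eq {f γ y : MvPolynomial σ R} (hf : Prime f) {r : ℕ}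
    {s : σ → ℕ} {x e : σ → MvPolynomial σ R} (hx : ∀ j, ¬ f ∣ x j) (hy : ¬ f ∣ y)
    (h : ∀ j, f ^ (s j + 1) * x j = f ^ r * (γ * pderiv j f * y + f * e j))
    {i : σ} (hi : s i + 1 = r) (j : σ) : pderiv j f ≠ 0 ↔ s j + 1 = r := by
  have hiff := fun j => hf.eq_iff_not_dvd_of_pow_mul_eq_pow_mul (hx j) (h j)
  have hγ : ¬ f ∣ γ := fun hγ => (hiff i).mp hi
    (dvd_add (dvd_mul_of_dvd_left (dvd_mul_of_dvd_left hγ _) _) (dvd_mul_right f _))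
  rw [hiff j]
  refine ⟨fun hj hdvd => ?_, fun hj h0 => hj ?_⟩
  · rcases hf.dvd_mul.mp ((dvd_add_left (dvd_mul_right f (e j))).mp hdvd) with h1 | h1
    · exact (hf.dvd_mul.mp h1).elim hγ (not_dvd_pderiv hj)
    · exact hy h1
  · rw [h0, mul_zero, zero_mul, zero_add]
    exact dvd_mul_right f _

end MvPolynomial

theorem zpow_mul_pow_toNat_neg {G₀ : Type*} [GroupWithZero G₀] {x : G₀} (hx : x ≠ 0) (z : ℤ) :
    x ^ z * x ^ (-z).toNat = x ^ z.toNat := by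
  rw [← zpow_natCast, ← zpow_natCast, ← zpow_add₀ hx]
  congr 1
  omega

theorem IsCone.homogeneousComponent_mem_vanIdeal {ι : Type} {X : Set (Pt ι)} (hX : IsCone X)
    {f : MvPolynomial ι ℂ} (hf : f ∈ vanIdeal X) (d : ℕ) : homogeneousComponent d f ∈ vanIdeal X :=
  fun x hx => eval_homogeneousComponent_eq_zero (fun t => hf _ (hX t x hx)) d

section TangentSpace

variable {ι : Type} [Fintype ι] {X : Set (Pt ι)} {p v : Pt ι}

theorem dotP_gradP (f : MvPolynomial ι ℂ) (p v : Pt ι) :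
    dotP (gradP f p) v = ∑ i, eval p (pderiv i f) * v i := rfl

theorem dotP_gradP_self {g : MvPolynomial ι ℂ} {d : ℕ} (hg : g.IsHomogeneous d) (p : Pt ι) :
    dotP (gradP g p) p = d * eval p g := by
  simpa [dotP_gradP, mul_comm, nsmul_eq_mul] using congrArg (eval p) hg.sum_X_mul_pderiv

theorem mem_tangentSpace_iff :
    v ∈ tangentSpace X p ↔ ∀ f ∈ vanIdeal X, dotP (gradP f p) v = 0 := by
  simp [tangentSpace, dotL, dotP, LinearMap.sum_apply]

theorem IsCone.mem_tangentSpace_of_isHomogeneous (hX : IsCone X)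
    (h : ∀ f ∈ vanIdeal X, ∀ d, f.IsHomogeneous d → dotP (gradP f p) v = 0) :
    v ∈ tangentSpace X p := by
  refine mem_tangentSpace_iff.mpr fun f hf => ?_
  rw [← sum_homogeneousComponent f]
  simp only [dotP_gradP, map_sum, Finset.sum_mul]
  rw [Finset.sum_comm]
  exact Finset.sum_eq_zero fun d _ => h _ (hX.homogeneousComponent_mem_vanIdeal hf d) d
    (homogeneousComponent_isHomogeneous d f)

theorem IsCone.mem_tangentSpace_self (hX : IsCone X) (hp : p ∈ X) : p ∈ tangentSpace X p :=
  hX.mem_tangentSpace_of_isHomogeneous fun _ hf _ hd => by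
    rw [dotP_gradP_self hd, hf p hp, mul_zero]

end TangentSpace

namespace RatMap

variable {ι κ : Type} [Fintype ι] {u : Pt ι}

theorem eval_eq_smul (Ψ : RatMap ι κ) :
    Ψ.eval u = (MvPolynomial.eval u Ψ.den)⁻¹ • fun k => MvPolynomial.eval u (Ψ.num k) := by
  funext k
  simp [RatMap.eval, div_eq_inv_mul]

theorem eval_aeval_num (Ψ : RatMap ι κ) {g : MvPolynomial κ ℂ} {d : ℕ} (hg : g.IsHomogeneous d)
    (hu : Ψ.isDefinedAt u) : MvPolynomial.eval u (aeval Ψ.num g)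
      = MvPolynomial.eval u Ψ.den ^ d * MvPolynomial.eval (Ψ.eval u) g := by
  rw [eval_eq_smul, hg.eval_smul, inv_pow, mul_inv_cancel_left₀ (pow_ne_zero _ hu),
    aeval_eq_bind₁]
  exact eval₂Hom_bind₁ _ _ _ _

variable (Ψ : RatMap ι ι)

-- The factor `b` on the right (rather than `b ^ (d - 1)` on the left) keeps this true for `d = 0`.
theorem eval_aeval_num_pderiv {g : MvPolynomial ι ℂ} {d : ℕ} (hg : g.IsHomogeneous d)
    (hu : Ψ.isDefinedAt u) (k : ι) :
    MvPolynomial.eval u Ψ.den ^ d * MvPolynomial.eval (Ψ.eval u) (pderiv k g)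
      = MvPolynomial.eval u Ψ.den * MvPolynomial.eval u (aeval Ψ.num (pderiv k g)) := by
  rcases d with _ | d
  · obtain ⟨c, rfl⟩ : ∃ c, g = C c :=
      ⟨_, totalDegree_eq_zero_iff_eq_C.mp (Nat.le_zero.mp hg.totalDegree_le)⟩
    simp
  · rw [Ψ.eval_aeval_num hg.pderiv hu, Nat.add_sub_cancel, pow_succ]
    ring

/-- `b² ∂ⱼΨ` at `u`, where `Ψ = a / b`. -/
noncomputable def derivNum (j : ι) (u : Pt ι) : Pt ι :=
  fun k => MvPolynomial.eval u (pderiv j (Ψ.num k) * Ψ.den - Ψ.num k * pderiv j Ψ.den)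

theorem dotP_gradP_derivNum {g : MvPolynomial ι ℂ} {d : ℕ} (hg : g.IsHomogeneous d)
    (hu : Ψ.isDefinedAt u) (j : ι) :
    MvPolynomial.eval u Ψ.den ^ d * dotP (gradP g (Ψ.eval u)) (Ψ.derivNum j u)
      = MvPolynomial.eval u Ψ.den * MvPolynomial.eval u (Ψ.den * pderiv j (aeval Ψ.num g)
        - d * pderiv j Ψ.den * aeval Ψ.num g) := by
  rw [← hg.sum_aeval_pderiv_mul, dotP_gradP, map_sum, Finset.mul_sum, Finset.mul_sum]
  refine Finset.sum_congr rfl fun k _ => ?_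
  rw [← mul_assoc, Ψ.eval_aeval_num_pderiv hg hu, derivNum, map_mul]
  ring

theorem aeval_num_eq_zero {V : Set (Pt ι)}
    (hΨV : Generically fun u => Ψ.isDefinedAt u ∧ Ψ.eval u ∈ V) {g : MvPolynomial ι ℂ}
    (hg : g ∈ vanIdeal V) {d : ℕ} (hgd : g.IsHomogeneous d) : aeval Ψ.num g = 0 :=
  Generically.eq_of_eval_eq <| hΨV.mono fun _ ⟨hu, hV⟩ => by
    rw [Ψ.eval_aeval_num hgd hu, hg _ hV, mul_zero, map_zero]

theorem derivNum_mem_tangentSpace {V : Set (Pt ι)} (hV : IsCone V)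
    (hΨV : Generically fun u => Ψ.isDefinedAt u ∧ Ψ.eval u ∈ V) (hu : Ψ.isDefinedAt u) (j : ι) :
    Ψ.derivNum j u ∈ tangentSpace V (Ψ.eval u) :=
  hV.mem_tangentSpace_of_isHomogeneous fun g hg _ hgd => by
    have h := Ψ.dotP_gradP_derivNum hgd hu j
    rw [Ψ.aeval_num_eq_zero hΨV hg hgd, map_zero, mul_zero, mul_zero, sub_zero, map_zero,
      mul_zero] at h
    exact (mul_eq_zero.mp h).resolve_left (pow_ne_zero _ hu)

theorem dotP_derivNum {e : ℕ} (h : ∑ k, X k * Ψ.num k = e * Ψ.den) (u : Pt ι) (j : ι) :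
    dotP u (Ψ.derivNum j u) = -MvPolynomial.eval u (Ψ.num j) * MvPolynomial.eval u Ψ.den := by
  classical
  have h₀ := congrArg (MvPolynomial.eval u) h
  have h₁ := congrArg (MvPolynomial.eval u ∘ pderiv j) h
  simp [pderiv_X, Pi.single_apply, Finset.sum_add_distrib] at h₀ h₁
  simp only [dotP, derivNum, map_sub, map_mul, mul_sub, Finset.sum_sub_distrib, ← mul_assoc,
    ← Finset.sum_mul]
  linear_combination MvPolynomial.eval u Ψ.den * h₁ - MvPolynomial.eval u (pderiv j Ψ.den) * h₀

theorem num_mul_prod_eq {𝓕 : Finset (MvPolynomial ι ℂ)} {c : ι → ℂ} {α : ι → MvPolynomial ι ℂ → ℤ}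
    (h : Generically fun u => Ψ.isDefinedAt u ∧ (∀ f ∈ 𝓕, MvPolynomial.eval u f ≠ 0) ∧
      ∀ i, Ψ.eval u i = c i * ∏ f ∈ 𝓕, MvPolynomial.eval u f ^ α i f) (i : ι) :
    Ψ.num i * ∏ f ∈ 𝓕, f ^ (-α i f).toNat = C (c i) * Ψ.den * ∏ f ∈ 𝓕, f ^ (α i f).toNat :=
  Generically.eq_of_eval_eq <| h.mono fun u ⟨hu, hf, hΨ⟩ => by
    have hnum : MvPolynomial.eval u (Ψ.num i)
        = c i * MvPolynomial.eval u Ψ.den * ∏ f ∈ 𝓕, MvPolynomial.eval u f ^ α i f := by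
      rw [mul_right_comm, ← hΨ i, RatMap.eval, div_mul_cancel₀ _ hu]
    simp only [map_mul, map_prod, map_pow, eval_C, hnum, mul_assoc, ← Finset.prod_mul_distrib]
    rw [Finset.prod_congr rfl fun f hf' => zpow_mul_pow_toNat_neg (hf f hf') _]

end RatMap

namespace IsMLEof

variable {ι : Type} [Fintype ι] {V : Set (Pt ι)} {F : MvPolynomial ι ℂ} {dF : ℕ}
  {Ψ : RatMap ι ι}

theorem generically_isCriticalPoint (hΨ : IsMLEof V F Ψ) :
    Generically fun u => Ψ.isDefinedAt u ∧ IsCriticalPoint V F u (Ψ.eval u) :=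
  hΨ.mono fun _ ⟨hu, hcrit⟩ => ⟨hu, (Set.ext_iff.mp hcrit _).mpr rfl⟩

theorem generically_mem (hΨ : IsMLEof V F Ψ) :
    Generically fun u => Ψ.isDefinedAt u ∧ Ψ.eval u ∈ V :=
  hΨ.generically_isCriticalPoint.mono fun _ ⟨hu, hcrit⟩ => ⟨hu, hcrit.1.1⟩

theorem aeval_num_ne_zero (hΨ : IsMLEof V F Ψ) (hF : F.IsHomogeneous dF) :
    aeval Ψ.num F ≠ 0 := by
  obtain ⟨u, hu, hcrit⟩ := hΨ.generically_isCriticalPoint.exists_point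
  intro h
  have := Ψ.eval_aeval_num hF hu
  rw [h, map_zero, eq_comm] at this
  exact mul_ne_zero (pow_ne_zero _ hu) hcrit.2.1 this

theorem sum_X_mul_num (hV : IsCone V) (hF : F.IsHomogeneous dF) (hΨ : IsMLEof V F Ψ) :
    ∑ k, X k * Ψ.num k = dF * Ψ.den :=
  Generically.eq_of_eval_eq <| hΨ.generically_isCriticalPoint.mono fun u ⟨hu, hsm, hF0, htan⟩ => by
    have h := htan _ (hV.mem_tangentSpace_self hsm.1)
    rw [dotP_gradP_self hF, mul_comm] at h
    have hdot := mul_left_cancel₀ hF0 h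
    simp only [dotP, RatMap.eval, mul_div_assoc', ← Finset.sum_div] at hdot
    rw [eq_div_iff hu] at hdot
    simp [← hdot]

theorem num_mul_aeval_eq (hV : IsCone V) (hF : F.IsHomogeneous dF) (hΨ : IsMLEof V F Ψ)
    (j : ι) : Ψ.num j * aeval Ψ.num F
      = dF * aeval Ψ.num F * pderiv j Ψ.den - Ψ.den * pderiv j (aeval Ψ.num F) :=
  Generically.eq_of_eval_eq <| hΨ.generically_isCriticalPoint.mono fun u ⟨hu, hsm, _, htan⟩ => by
    have htw := htan _ (Ψ.derivNum_mem_tangentSpace hV hΨ.generically_mem hu j)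
    have hgrad := Ψ.dotP_gradP_derivNum hF hu j
    rw [htw, Ψ.dotP_derivNum (hΨ.sum_X_mul_num hV hF) u j, ← mul_assoc,
      ← Ψ.eval_aeval_num hF hu] at hgrad
    apply mul_left_cancel₀ hu
    simp only [map_mul, map_sub, map_natCast] at hgrad ⊢
    linear_combination -hgrad

end IsMLEof

theorem mle_factorization_general {ι : Type} [Fintype ι]
    (C : Set (Pt ι)) (F : MvPolynomial ι ℂ) (dF : ℕ)
    (hcone : IsCone C) (hF : F.IsHomogeneous dF)
    (Ψ : RatMap ι ι) (hΨ : IsMLEof C F Ψ)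
    (𝓕 : Finset (MvPolynomial ι ℂ))
    (hprime : ∀ f ∈ 𝓕, Irreducible f)
    (hnonassoc : ∀ f ∈ 𝓕, ∀ g ∈ 𝓕, f ≠ g → ¬ Associated f g)
    (c : ι → ℂ) (hc : ∀ i, c i ≠ 0)
    (α : ι → MvPolynomial ι ℂ → ℤ)
    -- the coordinates of `Ψ` factor as `ψᵢ = cᵢ · ∏_{f ∈ 𝓕} f^{α_{i,f}}`
    (hfact : Generically (fun u : Pt ι =>
      Ψ.isDefinedAt u ∧ (∀ f ∈ 𝓕, MvPolynomial.eval u f ≠ 0) ∧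
        ∀ i, Ψ.eval u i = c i * ∏ f ∈ 𝓕, MvPolynomial.eval u f ^ α i f)) :
    ∀ f ∈ 𝓕,
      (∀ i, -1 ≤ α i f) ∧
      ((∃ i, α i f < 0) → ∀ j, (MvPolynomial.pderiv j f ≠ 0 ↔ α j f = -1)) := by
  intro f hf
  have hp : Prime f := (hprime f hf).prime
  obtain ⟨m, P', hP', hP⟩ := WfDvdMonoid.max_power_factor (hΨ.aeval_num_ne_zero hF) (hprime f hf)
  obtain ⟨r, b', hb', hb⟩ := WfDvdMonoid.max_power_factor Ψ.den_ne (hprime f hf)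
  choose s a' ha' ha hα using fun i => Prime.exists_eq_pow_mul_of_mul_prod_eq
    (fun g hg => (hprime g hg).prime) hnonassoc hf
    ((isUnit_iff_ne_zero.mpr (hc i)).map MvPolynomial.C) hb'
    (by rw [← hb]; exact Ψ.num_mul_prod_eq hfact i)
  have hx : ∀ j, ¬ f ∣ a' j * P' := fun j hd => (hp.dvd_mul.mp hd).elim (ha' j) hP'
  have hy : ¬ f ∣ b' * P' := fun hd => (hp.dvd_mul.mp hd).elim hb' hP'
  have key := fun j =>
    pow_succ_mul_eq_pow_mul_of_mul_eq hp.ne_zero (hΨ.num_mul_aeval_eq hcone hF j) (ha j) hb hP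
  have hle := fun j => hp.le_of_pow_mul_eq_pow_mul (hx j) (key j)
  refine ⟨fun i => by have := hle i; have := hα i; omega, fun ⟨i, hi⟩ j => ?_⟩
  have hi' : s i + 1 = r := by have := hle i; have := hα i; omega
  rw [pderiv_ne_zero_iff_of_pow_mul_eq hp hx hy key hi' j, hα j]
  omega

/-- **Proposition (factorization properties of the MLE).**
Let `Ψ` be the maximum likelihood estimator of a projective variety `X` (with
affine cone `C`) of ML degree one with respect to the homogeneous polynomial `F`.
Write each coordinate of `Ψ` as `ψᵢ = cᵢ · ∏_{f ∈ 𝓕} f^{α_{i,f}}` with `cᵢ ∈ ℂ`,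
`𝓕` the set of prime factors appearing in some coordinate, `α_{i,f} ∈ ℤ`.  Then
(a) `α_{i,f} ≥ −1` for all `i, f` (factors in denominators appear with exponent
one), and (b) if `f` appears in some denominator, then `∂f/∂u_j ≠ 0` if and only
if `α_{j,f} = −1`. -/
theorem mle_factorization {ι : Type} [Fintype ι] [DecidableEq ι]
    (C : Set (Pt ι)) (F : MvPolynomial ι ℂ) (dF : ℕ)
    (hvar : IsAffineVariety C) (hcone : IsCone C) (hF : F.IsHomogeneous dF)
    (hmld : MLDegreeIs C F 1)
    (Ψ : RatMap ι ι) (hΨ : IsMLEof C F Ψ)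
    (𝓕 : Finset (MvPolynomial ι ℂ))
    (hprime : ∀ f ∈ 𝓕, Irreducible f)
    (hnonassoc : ∀ f ∈ 𝓕, ∀ g ∈ 𝓕, f ≠ g → ¬ Associated f g)
    (c : ι → ℂ) (hc : ∀ i, c i ≠ 0)
    (α : ι → MvPolynomial ι ℂ → ℤ)
    -- the coordinates of `Ψ` factor as `ψᵢ = cᵢ · ∏_{f ∈ 𝓕} f^{α_{i,f}}`
    (hfact : Generically (fun u : Pt ι =>
      Ψ.isDefinedAt u ∧ (∀ f ∈ 𝓕, MvPolynomial.eval u f ≠ 0) ∧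
        ∀ i, Ψ.eval u i = c i * ∏ f ∈ 𝓕, MvPolynomial.eval u f ^ α i f))
    -- every `f ∈ 𝓕` genuinely appears in some coordinate
    (happears : ∀ f ∈ 𝓕, ∃ i, α i f ≠ 0) :
    ∀ f ∈ 𝓕,
      (∀ i, -1 ≤ α i f) ∧
      ((∃ i, α i f < 0) → ∀ j, (MvPolynomial.pderiv j f ≠ 0 ↔ α j f = -1)) :=
  mle_factorization_general C F dF hcone hF Ψ hΨ 𝓕 hprime hnonassoc c hc α hfact
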